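/- Let H be a complex Hilbert space and S a bounded operator on H. Then S is compact if and only if for every sequence (f_n) in H converging weakly to 0, one has ⟨S f_n, f_n⟩ → 0. -/

import Mathlib

/-!
A compact operator maps weakly null sequences to norm null ones: every cluster point of `S fₙ` is
also a weak limit of a subsequence, hence `0`. Since weakly null sequences are bounded
(Banach–Steinhaus), `⟪S fₙ, fₙ⟫ → 0` follows.

Conversely, polarization writes `⟪S fₙ, S fₙ⟫` as a combination of the `⟪S uₙ, uₙ⟫` with
`uₙ = S fₙ + c • fₙ`, which are weakly null, so `S` maps weakly null sequences to norm null ones.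
As every bounded sequence has a weakly convergent subsequence (Banach–Alaoglu), `S` then maps the
closed unit ball onto a sequentially compact set.
-/

open Filter
open scoped ComplexInnerProductSpace

open Topology
open scoped InnerProductSpace

def IsWeaklyNull (𝕜 : Type*) {E : Type*} [RCLike 𝕜] [NormedAddCommGroup E]
    [InnerProductSpace 𝕜 E] (f : ℕ → E) : Prop :=
  ∀ g : E, Tendsto (fun n => ⟪f n, g⟫_𝕜) atTop (𝓝 0)

section

variable {𝕜 E F : Type*} [RCLike 𝕜] [NormedAddCommGroup E] [InnerProductSpace 𝕜 E]
  [NormedAddCommGroup F] [InnerProductSpace 𝕜 F]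

namespace IsWeaklyNull

variable {f f' : ℕ → E}

theorem add (hf : IsWeaklyNull 𝕜 f) (hf' : IsWeaklyNull 𝕜 f') : IsWeaklyNull 𝕜 (f + f') :=
  fun g => by simpa only [Pi.add_apply, inner_add_left, add_zero] using (hf g).add (hf' g)

theorem sub (hf : IsWeaklyNull 𝕜 f) (hf' : IsWeaklyNull 𝕜 f') : IsWeaklyNull 𝕜 (f - f') :=
  fun g => by simpa only [Pi.sub_apply, inner_sub_left, sub_zero] using (hf g).sub (hf' g)

theorem const_smul (hf : IsWeaklyNull 𝕜 f) (c : 𝕜) : IsWeaklyNull 𝕜 (c • f) :=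
  fun g => by
    simpa only [Pi.smul_apply, inner_smul_left, mul_zero] using (hf g).const_mul (starRingEnd 𝕜 c)

theorem map [CompleteSpace E] [CompleteSpace F] (hf : IsWeaklyNull 𝕜 f) (T : E →L[𝕜] F) :
    IsWeaklyNull 𝕜 (T ∘ f) :=
  fun g => by simpa only [Function.comp_apply, ← T.adjoint_inner_right] using hf (T.adjoint g)

theorem exists_norm_le [CompleteSpace E] (hf : IsWeaklyNull 𝕜 f) : ∃ M, ∀ n, ‖f n‖ ≤ M := by
  obtain ⟨M, hM⟩ := banach_steinhaus (g := fun n => innerSL 𝕜 (f n)) fun g =>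
    (hf g).norm.bddAbove_range.imp fun _ hC n => hC ⟨n, rfl⟩
  exact ⟨M, fun n => (innerSL_apply_norm 𝕜 (f n)).symm.trans_le (hM n)⟩

theorem eq_zero_of_tendsto_comp (hf : IsWeaklyNull 𝕜 f) {ψ : ℕ → ℕ} (hψ : Tendsto ψ atTop atTop)
    {b : E} (hb : Tendsto (f ∘ ψ) atTop (𝓝 b)) : b = 0 :=
  inner_self_eq_zero.mp <| tendsto_nhds_unique (hb.inner tendsto_const_nhds) ((hf b).comp hψ)

end IsWeaklyNull

variable [CompleteSpace E]

theorem IsCompactOperator.tendsto_zero_of_isWeaklyNull [CompleteSpace F] {T : E →L[𝕜] F}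
    (hT : IsCompactOperator T) {f : ℕ → E} (hf : IsWeaklyNull 𝕜 f) :
    Tendsto (T ∘ f) atTop (𝓝 0) := by
  obtain ⟨M, hM⟩ := hf.exists_norm_le
  refine (hT.isCompact_closure_image_closedBall (f := (T : E →ₗ[𝕜] F)) M)
    |>.tendsto_nhds_of_unique_mapClusterPt
      (Eventually.of_forall fun n => subset_closure ⟨f n, mem_closedBall_zero_iff.mpr (hM n), rfl⟩)
      fun b _ hb => ?_
  obtain ⟨ψ, hψ, hlim⟩ := hb.tendsto_subseq
  exact (hf.map T).eq_zero_of_tendsto_comp hψ.tendsto_atTop hlim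

/- Sequential Banach–Alaoglu in the separable space `V`, the closed span of the sequence; the weak-*
limit is represented by Riesz, and pairing with `g` only sees the projection of `g` onto `V`. -/
theorem exists_isWeaklyNull_subseq_sub_of_norm_le (f : ℕ → E) {M : ℝ} (hM : ∀ n, ‖f n‖ ≤ M) :
    ∃ x, ‖x‖ ≤ M ∧ ∃ φ : ℕ → ℕ, StrictMono φ ∧ IsWeaklyNull 𝕜 (fun k => f (φ k) - x) := by
  set V := (Submodule.span 𝕜 (Set.range f)).topologicalClosure
  have hfV : ∀ n, f n ∈ V := fun n =>
    Submodule.le_topologicalClosure _ (Submodule.subset_span (Set.mem_range_self n))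
  have : TopologicalSpace.SeparableSpace V :=
    ((Set.countable_range f).isSeparable.span (R := 𝕜)).closure.separableSpace
  let ℓ : ℕ → WeakDual 𝕜 V := fun n => StrongDual.toWeakDual (innerSL 𝕜 (⟨f n, hfV n⟩ : V))
  obtain ⟨ℓ₀, hℓ₀, φ, hφ, hlim⟩ := WeakDual.isSeqCompact_closedBall 𝕜 V 0 M
    (x := ℓ) fun n => by simpa [ℓ] using hM n
  set x : V := (InnerProductSpace.toDual 𝕜 V).symm (WeakDual.toStrongDual ℓ₀)
  refine ⟨x, by simpa [x, Submodule.norm_coe] using hℓ₀, φ, hφ, fun g => ?_⟩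
  have hproj : ∀ u : V, ⟪(u : E), g⟫_𝕜 = ⟪u, V.orthogonalProjectionOnto g⟫_𝕜 := fun u =>
    (Submodule.inner_orthogonalProjectionOnto_eq_of_mem_left u g).symm
  set p := V.orthogonalProjectionOnto g
  have hx : ⟪(x : E), g⟫_𝕜 = ℓ₀ p := by rw [hproj, InnerProductSpace.toDual_symm_apply]; rfl
  have hfφ : ∀ k, ⟪f (φ k), g⟫_𝕜 = ℓ (φ k) p := fun k => hproj ⟨f (φ k), hfV _⟩
  simpa only [inner_sub_left, hx, hfφ, sub_self, Function.comp_def] using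
    (((WeakDual.eval_continuous p).tendsto ℓ₀).comp hlim).sub_const (ℓ₀ p)

theorem isCompactOperator_of_tendsto_zero_of_isWeaklyNull {G : Type*} [NormedAddCommGroup G]
    [NormedSpace 𝕜 G] (T : E →L[𝕜] G)
    (hT : ∀ f, IsWeaklyNull 𝕜 f → Tendsto (T ∘ f) atTop (𝓝 0)) : IsCompactOperator T := by
  refine (isCompactOperator_iff_image_closedBall_subset_compact (T : E →ₗ[𝕜] G) one_pos).mpr
    ⟨_, IsSeqCompact.isCompact fun u hu => ?_, subset_rfl⟩
  choose w hw hwu using hu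
  obtain ⟨x, hx, φ, hφ, hwx⟩ := exists_isWeaklyNull_subseq_sub_of_norm_le (𝕜 := 𝕜) w
    fun n => mem_closedBall_zero_iff.mp (hw n)
  refine ⟨T x, ⟨x, mem_closedBall_zero_iff.mpr hx, rfl⟩, φ, hφ, ?_⟩
  simpa [← hwu, Function.comp_def, tendsto_sub_nhds_zero_iff] using hT _ hwx

end

theorem tendsto_zero_of_isWeaklyNull_of_tendsto_inner_map_self {H : Type*}
    [NormedAddCommGroup H] [InnerProductSpace ℂ H] [CompleteSpace H] (S : H →L[ℂ] H)
    (hS : ∀ f, IsWeaklyNull ℂ f → Tendsto (fun n => ⟪S (f n), f n⟫) atTop (𝓝 0))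
    {f : ℕ → H} (hf : IsWeaklyNull ℂ f) : Tendsto (S ∘ f) atTop (𝓝 0) := by
  have hSf := hf.map S
  have hpol := fun n => inner_map_polarization (S : H →ₗ[ℂ] H) (S (f n)) (f n)
  have hnorm_sq : Tendsto (fun n => ‖S (f n)‖ ^ 2) atTop (𝓝 0) := by
    have := ((((hS _ (hSf.add hf)).sub (hS _ (hSf.sub hf))).add
      ((hS _ (hSf.add (hf.const_smul Complex.I))).const_mul Complex.I)).sub
      ((hS _ (hSf.sub (hf.const_smul Complex.I))).const_mul Complex.I)).div_const 4
    simpa using (this.congr fun n => (hpol n).symm).norm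
  rw [tendsto_zero_iff_norm_tendsto_zero]
  simpa [Real.sqrt_sq (norm_nonneg _)] using hnorm_sq.sqrt

/-- A bounded operator `S` on a complex Hilbert space is compact iff
`⟨S fₙ, fₙ⟩ → 0` for every sequence `fₙ ⇀ 0` weakly. -/
theorem stmt2 {H : Type*} [NormedAddCommGroup H] [InnerProductSpace ℂ H] [CompleteSpace H]
    (S : H →L[ℂ] H) :
    IsCompactOperator ⇑S ↔
      ∀ f : ℕ → H, (∀ g : H, Tendsto (fun n => ⟪f n, g⟫) atTop (nhds 0)) →
        Tendsto (fun n => ⟪S (f n), f n⟫) atTop (nhds 0) := by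
  refine ⟨fun hS f hf => ?_, fun hS => isCompactOperator_of_tendsto_zero_of_isWeaklyNull S
    fun _ => tendsto_zero_of_isWeaklyNull_of_tendsto_inner_map_self S hS⟩
  obtain ⟨M, hM⟩ := IsWeaklyNull.exists_norm_le hf
  have hSfM := (hS.tendsto_zero_of_isWeaklyNull hf).norm.mul_const M
  rw [norm_zero, zero_mul] at hSfM
  exact squeeze_zero_norm (fun n => (norm_inner_le_norm _ _).trans
    (mul_le_mul_of_nonneg_left (hM n) (norm_nonneg _))) hSfM
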